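/- arXiv:math/0606267 — 2 statements merged into one kernel-verified Lean document; each statement's English description precedes it below -/
import Mathlib

section
/- Let k be a field of characteristic 2 and let a, b be elements of the formal power series ring k[[u,v]]. Set x = u² + a·u, y = v² + b·v, and z = u·b + v·a. If a and b both lie in the ideal (x, y) of k[[u,v]], then the ideal (x, y, z) of k[[u,v]] equals the ideal (u², v²). (This identifies the schematic fiber of the quotient map of Artin's wild involution over the singular point: its ideal is the Frobenius power of the maximal ideal.) -/
/-! With `M = (a, b)`, `m = (u, v)` and `J = (u², v²)`, the congruences `x ≡ a u`, `y ≡ b v`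
modulo `J` give `M ⊆ (x, y) ⊆ J + m M`. As `m` lies in the Jacobson radical of `k[[u,v]]`,
Nakayama's lemma yields `M ⊆ J`, whence `x, y, z ∈ J`; conversely `u² = x - a u` and
`v² = y - b v` lie in `(x, y)`. -/

theorem MvPowerSeries.X_mem_jacobson_bot {σ R : Type*} [CommRing R] (i : σ) :
    (X i : MvPowerSeries σ R) ∈ (⊥ : Ideal (MvPowerSeries σ R)).jacobson :=
  Ideal.mem_jacobson_bot.2 fun f ↦ by simp [isUnit_iff_constantCoeff]

namespace Ideal

variable {R : Type*} [CommRing R]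

theorem span_pair_le_of_sub_mul_mem {J : Ideal R} {a b u v x y : R}
    (hu : u ∈ (⊥ : Ideal R).jacobson) (hv : v ∈ (⊥ : Ideal R).jacobson)
    (hx : x - a * u ∈ J) (hy : y - b * v ∈ J)
    (ha : a ∈ span {x, y}) (hb : b ∈ span {x, y}) :
    span {a, b} ≤ J := by
  have mem_sup {w c t : R} (ht : t ∈ span {u, v}) (hc : c ∈ span {a, b})
      (hw : w - c * t ∈ J) : w ∈ J ⊔ span {u, v} • span {a, b} := by
    have hct : c * t ∈ span {u, v} • span {a, b} :=
      mul_comm t c ▸ Submodule.smul_mem_smul ht hc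
    simpa using Submodule.add_mem_sup hw hct
  refine Submodule.le_of_le_smul_of_le_jacobson_bot (I := span {u, v})
    (Submodule.fg_span (Set.toFinite _)) (span_le.2 (Set.pair_subset hu hv)) ?_
  calc span {a, b} ≤ span {x, y} := span_le.2 (Set.pair_subset ha hb)
    _ ≤ J ⊔ span {u, v} • span {a, b} := span_le.2 <| Set.pair_subset
        (mem_sup (subset_span (by simp)) (subset_span (by simp)) hx)
        (mem_sup (subset_span (by simp)) (subset_span (by simp)) hy)

theorem span_triple_eq_span_sq_pair {a b u v x y z : R}
    (hu : u ∈ (⊥ : Ideal R).jacobson) (hv : v ∈ (⊥ : Ideal R).jacobson)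
    (hx : x = u ^ 2 + a * u) (hy : y = v ^ 2 + b * v) (hz : z = u * b + v * a)
    (ha : a ∈ span {x, y}) (hb : b ∈ span {x, y}) :
    span {x, y, z} = span {u ^ 2, v ^ 2} := by
  set J := span {u ^ 2, v ^ 2}
  have hu2 : u ^ 2 ∈ J := subset_span (by simp)
  have hv2 : v ^ 2 ∈ J := subset_span (by simp)
  have hxu : x - a * u = u ^ 2 := by rw [hx, add_sub_cancel_right]
  have hyv : y - b * v = v ^ 2 := by rw [hy, add_sub_cancel_right]
  have hab : span {a, b} ≤ J :=
    span_pair_le_of_sub_mul_mem hu hv (hxu ▸ hu2) (hyv ▸ hv2) ha hb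
  have haJ : a ∈ J := hab (subset_span (by simp))
  have hbJ : b ∈ J := hab (subset_span (by simp))
  have hxy : span {x, y} ≤ span {x, y, z} := span_mono (Set.insert_subset_insert (by simp))
  apply le_antisymm
  · refine span_le.2 (Set.insert_subset ?_ (Set.pair_subset ?_ ?_))
    · exact hx ▸ add_mem hu2 (J.mul_mem_right u haJ)
    · exact hy ▸ add_mem hv2 (J.mul_mem_right v hbJ)
    · exact hz ▸ add_mem (J.mul_mem_left u hbJ) (J.mul_mem_left v haJ)
  · refine span_le.2 (Set.pair_subset ?_ ?_)
    · exact hxu ▸ sub_mem (subset_span (by simp)) (mul_mem_right _ _ (hxy ha))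
    · exact hyv ▸ sub_mem (subset_span (by simp)) (mul_mem_right _ _ (hxy hb))

end Ideal

theorem fiber_ideal_eq_frobenius_power_general
    {k : Type*} [Field k]
    (a b x y z : MvPowerSeries (Fin 2) k)
    (hx : x = MvPowerSeries.X 0 ^ 2 + a * MvPowerSeries.X 0)
    (hy : y = MvPowerSeries.X 1 ^ 2 + b * MvPowerSeries.X 1)
    (hz : z = MvPowerSeries.X 0 * b + MvPowerSeries.X 1 * a)
    (ha : a ∈ Ideal.span {x, y})
    (hb : b ∈ Ideal.span {x, y}) :
    Ideal.span {x, y, z} =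
      Ideal.span {(MvPowerSeries.X 0 : MvPowerSeries (Fin 2) k) ^ 2,
        MvPowerSeries.X 1 ^ 2} :=
  Ideal.span_triple_eq_span_sq_pair (MvPowerSeries.X_mem_jacobson_bot 0)
    (MvPowerSeries.X_mem_jacobson_bot 1) hx hy hz ha hb

/-- Let `k` be a field of characteristic 2 and `a, b ∈ k[[u,v]]`.
Set `x = u² + a·u`, `y = v² + b·v`, `z = u·b + v·a`.  If `a` and `b` lie in the ideal
`(x, y)`, then `(x, y, z) = (u², v²)` as ideals of `k[[u,v]]`.
Here `u = X 0` and `v = X 1` in `MvPowerSeries (Fin 2) k`. -/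
theorem fiber_ideal_eq_frobenius_power
    {k : Type*} [Field k] [CharP k 2]
    (a b x y z : MvPowerSeries (Fin 2) k)
    (hx : x = MvPowerSeries.X 0 ^ 2 + a * MvPowerSeries.X 0)
    (hy : y = MvPowerSeries.X 1 ^ 2 + b * MvPowerSeries.X 1)
    (hz : z = MvPowerSeries.X 0 * b + MvPowerSeries.X 1 * a)
    (ha : a ∈ Ideal.span {x, y})
    (hb : b ∈ Ideal.span {x, y}) :
    Ideal.span {x, y, z} =
      Ideal.span {(MvPowerSeries.X 0 : MvPowerSeries (Fin 2) k) ^ 2,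
        MvPowerSeries.X 1 ^ 2} :=
  fiber_ideal_eq_frobenius_power_general a b x y z hx hy hz ha hb
end

section
/- Let k be a field of characteristic 2. Let A, B ∈ k[[X,Y]] be formal power series with zero constant term such that the ideal (A, B) is primary for the maximal ideal (X, Y) (i.e., A, B form a system of parameters of k[[X,Y]]). Suppose x, y ∈ k[[u,v]] have zero constant term and satisfy x = u² + a·u and y = v² + b·v, where a = A(x,y) and b = B(x,y) are obtained by substitution; set z = u·b + v·a. Let T ⊆ k[[u,v]] be the image of the continuous substitution homomorphism k[[X,Y,Z]] → k[[u,v]] sending X ↦ x, Y ↦ y, Z ↦ z. Then the contracted ideal T ∩ (a, b)·k[[u,v]] equals the ideal (a, b, z)·T of T. (This computes the ideal of the schematic image of the fixed scheme of Artin's wild involution under the quotient map.) -/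
/-!
Write `u = X 0`, `v = X 1`. Since `x ≡ u²` and `y ≡ v²` modulo `(a u, b v)`, the substitution `ψ`
of `(x, y)` agrees with the substitution `expand 2` of `(u², v²)` modulo `(a u, b v)`: this holds
on polynomials and passes to power series because ideals of the Noetherian local ring `k[[u,v]]`
are closed (Krull). The same argument shows that `φ` restricts to `ψ` on `k[[X,Y]]`. Applied to
`A` and `B` it gives `(a, b) ⊆ (A(u²,v²), B(u²,v²)) + (u, v)·(a, b)`, hence
`(a, b) ⊆ (A(u²,v²), B(u²,v²))` by Nakayama.

If now `t = φ F ∈ (a, b)`, split off the `Z`-part of `F`: `t = ψ G + z·φ F₁`. As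
`z = u b + v a ∈ (a, b)`, also `ψ G ∈ (a, b)`, hence `G(u², v²) ∈ (A(u²,v²), B(u²,v²))`. The map
`∑ c_d u^d ↦ ∑ c_{2d} u^d` is a `k[[X,Y]]`-linear retraction of `expand 2`, so `G ∈ (A, B)` and
`ψ G ∈ a T + b T`.
-/

namespace MvPowerSeries

theorem sub_truncTotal_mem_pow_span_range_X {σ R : Type*} [Finite σ] [CommRing R] (n : ℕ)
    (f : MvPowerSeries σ R) :
    f - truncTotal n f ∈ Ideal.span (Set.range (X : σ → MvPowerSeries σ R)) ^ n := by
  set g := f - (truncTotal n f : MvPowerSeries σ R)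
  -- `e` identifies `R⟦σ⟧` with the adic completion of `MvPolynomial σ R`, in which
  -- `idealOfVars ^ n • ⊤` is the kernel of the projection to level `n`.
  set e := toAdicCompletionAlgEquiv σ R
  have htrunc : truncTotal n g = 0 := by
    ext x
    rw [coeff_truncTotal_eq_ite, MvPolynomial.coeff_zero]
    split_ifs with hx
    · rw [map_sub, MvPolynomial.coeff_coe, coeff_truncTotal _ hx, sub_self]
    · rfl
  have hker : e g ∈ (MvPolynomial.idealOfVars σ R ^ n • ⊤ :
      Submodule (MvPolynomial σ R) (AdicCompletion _ (MvPolynomial σ R))) := by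
    rw [AdicCompletion.pow_smul_top_eq_ker_eval (MvPolynomial.idealOfVars_fg σ R),
      LinearMap.mem_ker, AdicCompletion.eval_apply, toAdicCompletionAlgEquiv_apply,
      toAdicCompletion_apply_eq_mk_truncTotal, htrunc, map_zero]
  have hg : g ∈ (MvPolynomial.idealOfVars σ R ^ n • ⊤ :
      Submodule (MvPolynomial σ R) (MvPowerSeries σ R)) := by
    have := Submodule.mem_map_of_mem (f := e.symm.toLinearMap) hker
    rwa [Submodule.map_smul'', Submodule.map_top, LinearMap.range_eq_top.2 e.symm.surjective,
      AlgEquiv.toLinearMap_apply, e.symm_apply_apply] at this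
  have hX : ⇑(algebraMap (MvPolynomial σ R) (MvPowerSeries σ R)) ∘ MvPolynomial.X = X := by
    funext i
    simp [algebraMap_apply']
  rwa [Ideal.smul_top_eq_map, Ideal.map_pow, Ideal.map_span, ← Set.range_comp, hX,
    Submodule.restrictScalars_mem] at hg

theorem X_mem_span_range_X {σ R : Type*} [Semiring R] (i : σ) :
    (X i : MvPowerSeries σ R) ∈ Ideal.span (Set.range X) :=
  Ideal.subset_span ⟨i, rfl⟩

theorem X_sq_add_mul_X_mem_span_range_X {σ R : Type*} [CommSemiring R] (i : σ)
    (c : MvPowerSeries σ R) : X i ^ 2 + c * X i ∈ Ideal.span (Set.range X) :=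
  add_mem (Ideal.pow_mem_of_mem _ (X_mem_span_range_X i) 2 two_pos)
    (Ideal.mul_mem_left _ _ (X_mem_span_range_X i))

theorem span_range_X_le_jacobson {σ R : Type*} [CommRing R] :
    Ideal.span (Set.range (X : σ → MvPowerSeries σ R)) ≤ Ideal.jacobson ⊥ := by
  rw [Ideal.span_le]
  rintro _ ⟨i, rfl⟩
  rw [SetLike.mem_coe, Ideal.mem_jacobson_bot]
  intro f
  simp [isUnit_iff_constantCoeff]

theorem map_pow_span_range_X_le {σ τ R S F : Type*} [CommSemiring R] [CommSemiring S]
    [FunLike F (MvPowerSeries σ R) (MvPowerSeries τ S)] [RingHomClass F _ _] (χ : F)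
    (hχ : ∀ i, χ (X i) ∈ Ideal.span (Set.range X)) (n : ℕ) :
    (Ideal.span (Set.range (X : σ → MvPowerSeries σ R)) ^ n).map χ ≤
      Ideal.span (Set.range (X : τ → MvPowerSeries τ S)) ^ n := by
  rw [Ideal.map_pow, Ideal.map_span, ← Set.range_comp]
  exact Ideal.pow_right_mono (Ideal.span_le.2 (Set.range_subset_iff.2 hχ)) n

end MvPowerSeries

theorem Ideal.mem_of_forall_mem_sup_pow {R : Type*} [CommRing R] [IsNoetherianRing R]
    {I J : Ideal R} (hI : I ≤ Ideal.jacobson ⊥) {f : R} (hf : ∀ n : ℕ, f ∈ J ⊔ I ^ n) :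
    f ∈ J := by
  rw [← Ideal.Quotient.eq_zero_iff_mem, ← Submodule.mem_bot R,
    ← Ideal.iInf_pow_smul_eq_bot_of_le_jacobson (M := R ⧸ J) I hI, Submodule.mem_iInf]
  intro n
  obtain ⟨j, hj, g, hg, rfl⟩ := Submodule.mem_sup.1 (hf n)
  rw [map_add, Ideal.Quotient.eq_zero_iff_mem.2 hj, zero_add, ← mul_one g, map_mul]
  exact Submodule.smul_mem_smul hg (Submodule.mem_top (x := Ideal.Quotient.mk J 1))

theorem Ideal.span_pair_le_span_pair_of_sub_mem {R : Type*} [CommRing R] {N : Ideal R}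
    (hN : N ≤ Ideal.jacobson ⊥) {a b a' b' : R} (ha : a - a' ∈ N * Ideal.span {a, b})
    (hb : b - b' ∈ N * Ideal.span {a, b}) : Ideal.span {a, b} ≤ Ideal.span {a', b'} := by
  refine Submodule.le_of_le_smul_of_le_jacobson_bot (Submodule.fg_span (Set.toFinite _)) hN ?_
  rw [Ideal.span_le, Set.insert_subset_iff, Set.singleton_subset_iff]
  exact ⟨Submodule.mem_sup.2 ⟨a', Ideal.subset_span (Or.inl rfl), a - a', ha, add_sub_cancel _ _⟩,
    Submodule.mem_sup.2 ⟨b', Ideal.subset_span (Or.inr rfl), b - b', hb, add_sub_cancel _ _⟩⟩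

namespace MvPowerSeries

section Substitution

variable {σ τ R : Type*} [Finite σ] [Finite τ] [CommRing R] [IsNoetherianRing R]

theorem algHom_sub_algHom_mem (χ₁ χ₂ : MvPowerSeries σ R →ₐ[R] MvPowerSeries τ R)
    {J : Ideal (MvPowerSeries τ R)} (h₁ : ∀ i, χ₁ (X i) ∈ Ideal.span (Set.range X))
    (h₂ : ∀ i, χ₂ (X i) ∈ Ideal.span (Set.range X)) (hJ : ∀ i, χ₁ (X i) - χ₂ (X i) ∈ J)
    (f : MvPowerSeries σ R) : χ₁ f - χ₂ f ∈ J := by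
  have hpoly (P : MvPolynomial σ R) : χ₁ P - χ₂ P ∈ J := by
    have hext : (Ideal.Quotient.mkₐ R J).comp (χ₁.comp (MvPolynomial.coeToMvPowerSeries.algHom R))
        = (Ideal.Quotient.mkₐ R J).comp (χ₂.comp (MvPolynomial.coeToMvPowerSeries.algHom R)) :=
      MvPolynomial.algHom_ext fun i => by
        simpa [Ideal.Quotient.mk_eq_mk_iff_sub_mem] using hJ i
    simpa [Ideal.Quotient.mk_eq_mk_iff_sub_mem] using congr($hext P)
  refine Ideal.mem_of_forall_mem_sup_pow span_range_X_le_jacobson fun n => ?_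
  have hr := sub_truncTotal_mem_pow_span_range_X n f
  have hsplit : χ₁ f - χ₂ f = (χ₁ (truncTotal n f) - χ₂ (truncTotal n f))
      + (χ₁ (f - truncTotal n f) - χ₂ (f - truncTotal n f)) := by
    simp only [map_sub]
    ring
  rw [hsplit]
  exact Submodule.add_mem_sup (hpoly _) (sub_mem
    (map_pow_span_range_X_le χ₁ h₁ n (Ideal.mem_map_of_mem χ₁ hr))
    (map_pow_span_range_X_le χ₂ h₂ n (Ideal.mem_map_of_mem χ₂ hr)))

theorem algHom_ext_of_X_mem {χ₁ χ₂ : MvPowerSeries σ R →ₐ[R] MvPowerSeries τ R}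
    (h₂ : ∀ i, χ₂ (X i) ∈ Ideal.span (Set.range X)) (h : ∀ i, χ₁ (X i) = χ₂ (X i)) :
    χ₁ = χ₂ :=
  AlgHom.ext fun f => sub_eq_zero.1 <| (Submodule.mem_bot _).1 <|
    algHom_sub_algHom_mem χ₁ χ₂ (fun i => h i ▸ h₂ i) h₂ (fun i => by simp [h i]) f

end Substitution

section Contract

variable {σ R : Type*} [CommRing R] (p : ℕ) (hp : p ≠ 0)

noncomputable def contract (f : MvPowerSeries σ R) : MvPowerSeries σ R :=
  fun d => coeff (p • d) f

theorem coeff_contract (f : MvPowerSeries σ R) (d : σ →₀ ℕ) :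
    coeff d (contract p f) = coeff (p • d) f := rfl

theorem contract_add (f g : MvPowerSeries σ R) :
    contract p (f + g) = contract p f + contract p g := by
  ext d
  simp [coeff_contract]

theorem contract_zero : contract p (0 : MvPowerSeries σ R) = 0 := by
  ext d
  simp [coeff_contract]

theorem contract_expand (f : MvPowerSeries σ R) : contract p (expand p hp f) = f := by
  ext d
  rw [coeff_contract, coeff_expand_smul]

theorem contract_mul_expand (f g : MvPowerSeries σ R) :
    contract p (f * expand p hp g) = contract p f * g := by
  classical
  ext d
  rw [coeff_contract, coeff_mul, coeff_mul, ← Finset.sum_subset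
    (s₁ := (Finset.HasAntidiagonal.antidiagonal d).image fun x ↦ (p • x.1, p • x.2)),
    Finset.sum_image]
  · simp only [coeff_expand_smul, coeff_contract]
  · intro x _ y _ h
    simpa [Prod.ext_iff, nsmul_right_inj hp] using h
  · intro z hz
    obtain ⟨x, hx, rfl⟩ := Finset.mem_image.1 hz
    rw [Finset.HasAntidiagonal.mem_antidiagonal] at hx ⊢
    rw [← smul_add, hx]
  rintro ⟨x, y⟩ hxy hne
  rw [Finset.HasAntidiagonal.mem_antidiagonal] at hxy
  by_cases h : ∀ i, p ∣ y i
  · have hx : ∀ i, p ∣ x i := fun i => (Nat.dvd_add_left (h i)).1 <| by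
      rw [← Finsupp.add_apply, hxy, Finsupp.smul_apply, smul_eq_mul]
      exact dvd_mul_right p (d i)
    have hdiv {w : σ →₀ ℕ} (hw : ∀ i, p ∣ w i) : p • w.mapRange (· / p) (by simp) = w := by
      ext i
      simp [Nat.mul_div_cancel' (hw i)]
    refine absurd (Finset.mem_image.2
      ⟨(x.mapRange (· / p) (by simp), y.mapRange (· / p) (by simp)), ?_, ?_⟩) hne
    · rw [Finset.HasAntidiagonal.mem_antidiagonal, ← nsmul_right_inj hp, smul_add, hdiv hx,
        hdiv h, hxy]
    · simp [hdiv hx, hdiv h]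
  · obtain ⟨i, hi⟩ := not_forall.1 h
    rw [coeff_expand_of_not_dvd p hp g hi, mul_zero]

theorem expand_mem_map_expand_iff {I : Ideal (MvPowerSeries σ R)} {f : MvPowerSeries σ R} :
    expand p hp f ∈ I.map (expand p hp) ↔ f ∈ I := by
  refine ⟨fun h => ?_, Ideal.mem_map_of_mem _⟩
  suffices hI : ∀ y ∈ I.map (expand p hp), ∀ r, contract p (r * y) ∈ I by
    simpa [contract_expand] using hI _ h 1
  intro y hy
  induction hy using Submodule.span_induction with
  | mem y hy =>
    obtain ⟨g, hg, rfl⟩ := hy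
    intro r
    rw [contract_mul_expand]
    exact I.mul_mem_left _ hg
  | zero => simp [contract_zero]
  | add y z _ _ hy hz =>
    intro r
    rw [mul_add, contract_add]
    exact add_mem (hy r) (hz r)
  | smul s y _ hy =>
    intro r
    rw [smul_eq_mul, ← mul_assoc]
    exact hy _

end Contract

theorem X_last_dvd_sub_rename_killCompl {R : Type*} [CommRing R] {n : ℕ}
    (F : MvPowerSeries (Fin (n + 1)) R) :
    X (Fin.last n) ∣ F - rename Fin.castSuccEmb (killCompl Fin.castSuccEmb F) := by
  rw [X_dvd_iff]
  intro m hm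
  have hsupp : (m.support : Set (Fin (n + 1))) ⊆ Set.range Fin.castSuccEmb := by
    intro j hj
    obtain ⟨i, rfl⟩ | rfl := Fin.eq_castSucc_or_eq_last j
    · exact ⟨i, rfl⟩
    · exact absurd hm (Finsupp.mem_support_iff.1 hj)
  rw [← Finsupp.embDomain_comapDomain hsupp, map_sub, coeff_embDomain_rename, coeff_killCompl,
    sub_self]

end MvPowerSeries

namespace ArtinInvolution

open MvPowerSeries

variable {k : Type*} [CommRing k] {A B a b : MvPowerSeries (Fin 2) k}
  {ψ : MvPowerSeries (Fin 2) k →ₐ[k] MvPowerSeries (Fin 2) k}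

theorem map_X_mem_span_range_X (hψ0 : ψ (X 0) = X 0 ^ 2 + a * X 0)
    (hψ1 : ψ (X 1) = X 1 ^ 2 + b * X 1) (i : Fin 2) : ψ (X i) ∈ Ideal.span (Set.range X) := by
  fin_cases i
  · exact hψ0 ▸ X_sq_add_mul_X_mem_span_range_X 0 a
  · exact hψ1 ▸ X_sq_add_mul_X_mem_span_range_X 1 b

variable [IsNoetherianRing k]

theorem sub_expand_mem_span (hψ0 : ψ (X 0) = X 0 ^ 2 + a * X 0)
    (hψ1 : ψ (X 1) = X 1 ^ 2 + b * X 1) (g : MvPowerSeries (Fin 2) k) :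
    ψ g - expand 2 two_ne_zero g ∈ Ideal.span {a * X 0, b * X 1} := by
  refine algHom_sub_algHom_mem ψ (expand 2 two_ne_zero) (map_X_mem_span_range_X hψ0 hψ1)
    (fun i => by simpa using X_sq_add_mul_X_mem_span_range_X i (0 : MvPowerSeries (Fin 2) k)) ?_ g
  simp only [Fin.forall_fin_two, hψ0, hψ1, expand_X, add_sub_cancel_left]
  exact ⟨Ideal.subset_span (Or.inl rfl), Ideal.subset_span (Or.inr rfl)⟩

theorem span_le_span_expand (hψ0 : ψ (X 0) = X 0 ^ 2 + a * X 0)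
    (hψ1 : ψ (X 1) = X 1 ^ 2 + b * X 1) (ha : ψ A = a) (hb : ψ B = b) :
    Ideal.span {a, b} ≤ Ideal.span {expand 2 two_ne_zero A, expand 2 two_ne_zero B} := by
  have hle : Ideal.span {a * X 0, b * X 1} ≤ Ideal.span (Set.range X) * Ideal.span {a, b} := by
    rw [Ideal.span_le, Set.insert_subset_iff, Set.singleton_subset_iff, mul_comm a, mul_comm b]
    exact ⟨Ideal.mul_mem_mul (X_mem_span_range_X 0) (Ideal.subset_span (Or.inl rfl)),
      Ideal.mul_mem_mul (X_mem_span_range_X 1) (Ideal.subset_span (Or.inr rfl))⟩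
  exact Ideal.span_pair_le_span_pair_of_sub_mem span_range_X_le_jacobson
    (hle (ha ▸ sub_expand_mem_span hψ0 hψ1 A)) (hle (hb ▸ sub_expand_mem_span hψ0 hψ1 B))

theorem mem_span_of_map_mem_span (hψ0 : ψ (X 0) = X 0 ^ 2 + a * X 0)
    (hψ1 : ψ (X 1) = X 1 ^ 2 + b * X 1) (ha : ψ A = a) (hb : ψ B = b)
    {g : MvPowerSeries (Fin 2) k} (hg : ψ g ∈ Ideal.span {a, b}) : g ∈ Ideal.span {A, B} := by
  have hsub : Ideal.span {a * X 0, b * X 1} ≤ Ideal.span {a, b} := by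
    rw [Ideal.span_le, Set.insert_subset_iff, Set.singleton_subset_iff]
    exact ⟨Ideal.mul_mem_right _ _ (Ideal.subset_span (Or.inl rfl)),
      Ideal.mul_mem_right _ _ (Ideal.subset_span (Or.inr rfl))⟩
  have hexp : expand 2 two_ne_zero g ∈ Ideal.span {a, b} :=
    sub_sub_cancel (ψ g) (expand 2 two_ne_zero g) ▸
      sub_mem hg (hsub (sub_expand_mem_span hψ0 hψ1 g))
  rw [← expand_mem_map_expand_iff 2 two_ne_zero, Ideal.map_span, Set.image_pair]
  exact span_le_span_expand hψ0 hψ1 ha hb hexp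

theorem exists_eq_of_mem_span (hψ0 : ψ (X 0) = X 0 ^ 2 + a * X 0)
    (hψ1 : ψ (X 1) = X 1 ^ 2 + b * X 1) (ha : ψ A = a) (hb : ψ B = b) {z : MvPowerSeries (Fin 2) k}
    (hz : z ∈ Ideal.span {a, b}) {φ : MvPowerSeries (Fin 3) k →ₐ[k] MvPowerSeries (Fin 2) k}
    (hφ : φ.comp (rename Fin.castSuccEmb) = ψ) (hφ2 : φ (X 2) = z) {F : MvPowerSeries (Fin 3) k}
    (hF : φ F ∈ Ideal.span {a, b}) :
    ∃ c d F₁, φ F = ψ c * a + ψ d * b + φ F₁ * z := by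
  obtain ⟨F₁, hF₁⟩ := X_last_dvd_sub_rename_killCompl F
  set G := killCompl Fin.castSuccEmb F
  have hφF : φ F = ψ G + z * φ F₁ := by
    rw [← hφ, AlgHom.comp_apply, ← hφ2, ← map_mul, ← map_add,
      show (2 : Fin 3) = Fin.last 2 from rfl, ← hF₁, add_sub_cancel]
  have hG : ψ G ∈ Ideal.span {a, b} :=
    eq_sub_of_add_eq hφF.symm ▸ sub_mem hF (Ideal.mul_mem_right _ _ hz)
  obtain ⟨c, d, hcd⟩ := Ideal.mem_span_pair.1 (mem_span_of_map_mem_span hψ0 hψ1 ha hb hG)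
  exact ⟨c, d, F₁, by rw [hφF, ← hcd, map_add, map_mul, map_mul, ha, hb]; ring⟩

end ArtinInvolution

open ArtinInvolution MvPowerSeries in
theorem image_of_fixed_scheme_ideal_general
    {k : Type*} [Field k]
    (A B : MvPowerSeries (Fin 2) k)
    (x y a b z : MvPowerSeries (Fin 2) k)
    (ψ : MvPowerSeries (Fin 2) k →ₐ[k] MvPowerSeries (Fin 2) k)
    (hψ0 : ψ (MvPowerSeries.X 0) = x) (hψ1 : ψ (MvPowerSeries.X 1) = y)
    (ha : a = ψ A) (hb : b = ψ B)
    (hx : x = MvPowerSeries.X 0 ^ 2 + a * MvPowerSeries.X 0)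
    (hy : y = MvPowerSeries.X 1 ^ 2 + b * MvPowerSeries.X 1)
    (hz : z = MvPowerSeries.X 0 * b + MvPowerSeries.X 1 * a)
    (φ : MvPowerSeries (Fin 3) k →ₐ[k] MvPowerSeries (Fin 2) k)
    (hφ0 : φ (MvPowerSeries.X 0) = x) (hφ1 : φ (MvPowerSeries.X 1) = y)
    (hφ2 : φ (MvPowerSeries.X 2) = z) :
    Ideal.comap φ.range.val (Ideal.span {a, b}) =
      Ideal.span {t : φ.range | (t : MvPowerSeries (Fin 2) k) = a ∨
        (t : MvPowerSeries (Fin 2) k) = b ∨ (t : MvPowerSeries (Fin 2) k) = z} := by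
  have hψx := hψ0.trans hx
  have hψy := hψ1.trans hy
  have hφψ : φ.comp (rename Fin.castSuccEmb) = ψ := algHom_ext_of_X_mem
    (map_X_mem_span_range_X hψx hψy) (by simp [Fin.forall_fin_two, hφ0, hφ1, hψ0, hψ1])
  have hT (g : MvPowerSeries (Fin 2) k) : ψ g ∈ φ.range := ⟨_, congr($hφψ g)⟩
  have hzab : z ∈ Ideal.span {a, b} := Ideal.mem_span_pair.2 ⟨X 1, X 0, by rw [hz]; ring⟩
  apply le_antisymm
  · intro t ht
    obtain ⟨F, hF⟩ := (AlgHom.mem_range φ).1 t.2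
    obtain ⟨c, d, F₁, hcd⟩ :=
      exists_eq_of_mem_span hψx hψy ha.symm hb.symm hzab hφψ hφ2 (by rw [hF]; exact ht)
    have hsplit : t = ⟨ψ c, hT c⟩ * ⟨a, ha ▸ hT A⟩ + ⟨ψ d, hT d⟩ * ⟨b, hb ▸ hT B⟩
        + ⟨φ F₁, F₁, rfl⟩ * ⟨z, X 2, hφ2⟩ := Subtype.ext (by simp [← hF, hcd])
    rw [hsplit]
    exact add_mem (add_mem (Ideal.mul_mem_left _ _ (Ideal.subset_span (Or.inl rfl)))
      (Ideal.mul_mem_left _ _ (Ideal.subset_span (Or.inr (Or.inl rfl)))))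
      (Ideal.mul_mem_left _ _ (Ideal.subset_span (Or.inr (Or.inr rfl))))
  · rw [Ideal.span_le]
    rintro t (h | h | h) <;> rw [SetLike.mem_coe, Ideal.mem_comap, Subalgebra.coe_val, h]
    exacts [Ideal.subset_span (Or.inl rfl), Ideal.subset_span (Or.inr rfl), hzab]

/-- (`k` of characteristic 2.)  Let `A, B ∈ k[[X,Y]]` be a system of
parameters with zero constant term; let `x, y ∈ k[[u,v]]` with zero constant term
satisfy `x = u² + a·u`, `y = v² + b·v` where `a = A(x,y)`, `b = B(x,y)`, and set
`z = u·b + v·a`.  Substitution is encoded by (necessarily unique) adically continuous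
`k`-algebra homomorphisms: `ψ : k[[X,Y]] → k[[u,v]]` with `ψ(X) = x`, `ψ(Y) = y`, and
`φ : k[[X,Y,Z]] → k[[u,v]]` with `φ(X) = x`, `φ(Y) = y`, `φ(Z) = z`, each mapping the
`n`-th power of the maximal ideal into the `n`-th power of `(u,v)`.  With
`T = range φ ⊆ k[[u,v]]`, the contraction `T ∩ (a, b)·k[[u,v]]` equals the ideal
`(a, b, z)·T` of `T`.  Here `u = X 0`, `v = X 1` in `MvPowerSeries (Fin 2) k`. -/
theorem image_of_fixed_scheme_ideal
    {k : Type*} [Field k] [CharP k 2]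
    (A B : MvPowerSeries (Fin 2) k)
    (hA0 : (MvPowerSeries.constantCoeff : MvPowerSeries (Fin 2) k →+* k) A = 0)
    (hB0 : (MvPowerSeries.constantCoeff : MvPowerSeries (Fin 2) k →+* k) B = 0)
    (hAB : (Ideal.span {A, B}).radical =
      Ideal.span {(MvPowerSeries.X 0 : MvPowerSeries (Fin 2) k), MvPowerSeries.X 1})
    (x y a b z : MvPowerSeries (Fin 2) k)
    (hx0 : (MvPowerSeries.constantCoeff : MvPowerSeries (Fin 2) k →+* k) x = 0)
    (hy0 : (MvPowerSeries.constantCoeff : MvPowerSeries (Fin 2) k →+* k) y = 0)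
    (ψ : MvPowerSeries (Fin 2) k →ₐ[k] MvPowerSeries (Fin 2) k)
    (hψ0 : ψ (MvPowerSeries.X 0) = x) (hψ1 : ψ (MvPowerSeries.X 1) = y)
    (hψcont : ∀ n : ℕ, Ideal.map ψ
        ((Ideal.span {(MvPowerSeries.X 0 : MvPowerSeries (Fin 2) k), MvPowerSeries.X 1}) ^ n) ≤
      (Ideal.span {(MvPowerSeries.X 0 : MvPowerSeries (Fin 2) k), MvPowerSeries.X 1}) ^ n)
    (ha : a = ψ A) (hb : b = ψ B)
    (hx : x = MvPowerSeries.X 0 ^ 2 + a * MvPowerSeries.X 0)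
    (hy : y = MvPowerSeries.X 1 ^ 2 + b * MvPowerSeries.X 1)
    (hz : z = MvPowerSeries.X 0 * b + MvPowerSeries.X 1 * a)
    (φ : MvPowerSeries (Fin 3) k →ₐ[k] MvPowerSeries (Fin 2) k)
    (hφ0 : φ (MvPowerSeries.X 0) = x) (hφ1 : φ (MvPowerSeries.X 1) = y)
    (hφ2 : φ (MvPowerSeries.X 2) = z)
    (hφcont : ∀ n : ℕ, Ideal.map φ
        ((Ideal.span {(MvPowerSeries.X 0 : MvPowerSeries (Fin 3) k), MvPowerSeries.X 1,
          MvPowerSeries.X 2}) ^ n) ≤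
      (Ideal.span {(MvPowerSeries.X 0 : MvPowerSeries (Fin 2) k), MvPowerSeries.X 1}) ^ n) :
    Ideal.comap φ.range.val (Ideal.span {a, b}) =
      Ideal.span {t : φ.range | (t : MvPowerSeries (Fin 2) k) = a ∨
        (t : MvPowerSeries (Fin 2) k) = b ∨ (t : MvPowerSeries (Fin 2) k) = z} :=
  image_of_fixed_scheme_ideal_general A B x y a b z ψ hψ0 hψ1 ha hb hx hy hz φ hφ0 hφ1 hφ2
end
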